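/- Let ⟨X, Y, I⟩ be an L-context and Σ a set of FAIs in Y. The following are equivalent: (1) Σ is S-complete in ⟨X, Y, I⟩; (2) Mod^S(Σ) = {M ∈ L^Y : M = M^{↓↑}}; (3) [M]^S_Σ = M^{↓↑} for all M ∈ L^Y. -/

import Mathlib

/-- A complete residuated lattice: a complete lattice with a commutative, associative
multiplication whose neutral element is the top element and which distributes over
arbitrary suprema. -/
class CompleteResiduatedLattice (L : Type*) extends CompleteLattice L, CommMonoid L where
  mul_sSup : ∀ (a : L) (s : Set L), a * sSup s = ⨆ b ∈ s, a * b
  one_eq_top : (1 : L) = ⊤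

namespace FAIparam

variable {L : Type*} {Y : Type*} {X : Type*}

/-- A fuzzy attribute implication (FAI): a pair (antecedent, consequent) of L-sets in Y. -/
abbrev FAI (L Y : Type*) := (Y → L) × (Y → L)

/-- A pair of operators on L-sets in Y. -/
abbrev OpPair (L Y : Type*) := ((Y → L) → (Y → L)) × ((Y → L) → (Y → L))

/-- S is a parameterization: every pair in S is a monotone Galois connection, the identity
pair belongs to S, and S is closed under composition ⟨f₁,g₁⟩∘⟨f₂,g₂⟩ = ⟨f₁∘f₂, g₂∘g₁⟩. -/
def IsParam [CompleteResiduatedLattice L] (S : Set (OpPair L Y)) : Prop :=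
  (∀ p ∈ S, ∀ A B : Y → L, p.1 A ≤ B ↔ A ≤ p.2 B) ∧
  (((id, id) : OpPair L Y) ∈ S) ∧
  (∀ p ∈ S, ∀ q ∈ S, ((p.1 ∘ q.1, q.2 ∘ p.2) : OpPair L Y) ∈ S)

/-- M ⊨^S A ⇒ B : for every ⟨f,g⟩ ∈ S, f(A) ⊆ M implies f(B) ⊆ M. -/
def Sat [CompleteResiduatedLattice L] (S : Set (OpPair L Y)) (M : Y → L) (φ : FAI L Y) : Prop :=
  ∀ p ∈ S, p.1 φ.1 ≤ M → p.1 φ.2 ≤ M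

/-- The set Mod^S(Th) of S-models of a theory Th. -/
def ModS [CompleteResiduatedLattice L] (S : Set (OpPair L Y)) (Th : Set (FAI L Y)) :
    Set (Y → L) :=
  {M | ∀ φ ∈ Th, Sat S M φ}

/-- Semantic entailment Th ⊨^S φ, i.e. Mod^S(Th) ⊆ Mod^S({φ}). -/
def Entails [CompleteResiduatedLattice L] (S : Set (OpPair L Y)) (Th : Set (FAI L Y))
    (φ : FAI L Y) : Prop :=
  ModS S Th ⊆ ModS S {φ}

/-- [A]^S_Th : the least S-model of Th containing A (intersection of all such models). -/
def clS [CompleteResiduatedLattice L] (S : Set (OpPair L Y)) (Th : Set (FAI L Y))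
    (A : Y → L) : Y → L :=
  sInf {M | M ∈ ModS S Th ∧ A ≤ M}

/-- S-closure operator on L^Y. -/
def IsSClosureOp [CompleteResiduatedLattice L] (S : Set (OpPair L Y))
    (c : (Y → L) → (Y → L)) : Prop :=
  (∀ A, A ≤ c A) ∧ (∀ A B, A ≤ B → c A ≤ c B) ∧
  (∀ p ∈ S, ∀ A, c (p.2 (c A)) ≤ p.2 (c A))

/-- S-closure system in ⟨L^Y, ⊆⟩. -/
def IsSClosureSys [CompleteResiduatedLattice L] (S : Set (OpPair L Y))
    (𝒮 : Set (Y → L)) : Prop :=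
  (∀ T ⊆ 𝒮, sInf T ∈ 𝒮) ∧ (∀ p ∈ S, ∀ M ∈ 𝒮, p.2 M ∈ 𝒮)

/-- c_𝒮(A) = ⋂{B ∈ 𝒮 : A ⊆ B}. -/
def clSys [CompleteResiduatedLattice L] (𝒮 : Set (Y → L)) (A : Y → L) : Y → L :=
  sInf {B | B ∈ 𝒮 ∧ A ≤ B}

/-- I ⊨^S A ⇒ B for an L-context ⟨X,Y,I⟩ (with I curried, I x = I_x). -/
def CtxSat [CompleteResiduatedLattice L] (S : Set (OpPair L Y)) (I : X → Y → L)
    (φ : FAI L Y) : Prop :=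
  ∀ x, Sat S (I x) φ

/-- S_g : the set of upper adjoints occurring in S. -/
def Sg [CompleteResiduatedLattice L] (S : Set (OpPair L Y)) : Set ((Y → L) → (Y → L)) :=
  {g | ∃ f, (f, g) ∈ S}

/-- F^↑ = ⋂{g(I_x) : ⟨x,g⟩ ∈ F}. -/
def upOp [CompleteResiduatedLattice L] (I : X → Y → L)
    (F : Set (X × ((Y → L) → (Y → L)))) : Y → L :=
  ⨅ xg ∈ F, xg.2 (I xg.1)

/-- G^↓ = {⟨x,g⟩ ∈ X × S_g : G ⊆ g(I_x)}. -/
def downOp [CompleteResiduatedLattice L] (S : Set (OpPair L Y)) (I : X → Y → L)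
    (G : Y → L) : Set (X × ((Y → L) → (Y → L))) :=
  {xg | xg.2 ∈ Sg S ∧ G ≤ xg.2 (I xg.1)}

/-- G^{↓↑} = ⋂{g(I_x) : x ∈ X, ⟨f,g⟩ ∈ S, G ⊆ g(I_x)}. -/
def dnup [CompleteResiduatedLattice L] (S : Set (OpPair L Y)) (I : X → Y → L)
    (G : Y → L) : Y → L :=
  upOp I (downOp S I G)

/-- Σ is S-complete in ⟨X,Y,I⟩. -/
def SComplete [CompleteResiduatedLattice L] (S : Set (OpPair L Y)) (Th : Set (FAI L Y))
    (I : X → Y → L) : Prop :=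
  ∀ A B : Y → L, Entails S Th (A, B) ↔ CtxSat S I (A, B)

/-- Σ is an S-base of ⟨X,Y,I⟩. -/
def SBase [CompleteResiduatedLattice L] (S : Set (OpPair L Y)) (Th : Set (FAI L Y))
    (I : X → Y → L) : Prop :=
  SComplete S Th I ∧ ∀ Th' ⊂ Th, ¬ SComplete S Th' I

/-- S-provability: axioms A∪B ⇒ A, assumptions from Th, rule (Cut) and rule (F). -/
inductive ProvS [CompleteResiduatedLattice L] (S : Set (OpPair L Y)) (Th : Set (FAI L Y)) :
    FAI L Y → Prop
  | ax (A B : Y → L) : ProvS S Th (A ⊔ B, A)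
  | hyp {φ : FAI L Y} (h : φ ∈ Th) : ProvS S Th φ
  | cut {A B C D : Y → L} : ProvS S Th (A, B) → ProvS S Th (B ⊔ C, D) → ProvS S Th (A ⊔ C, D)
  | mul {A B : Y → L} {p : OpPair L Y} (hp : p ∈ S) : ProvS S Th (A, B) → ProvS S Th (p.1 A, p.1 B)

/-- Provability using the axioms and (Cut) as the only inference rule. -/
inductive ProvCut [CompleteResiduatedLattice L] (Th : Set (FAI L Y)) : FAI L Y → Prop
  | ax (A B : Y → L) : ProvCut Th (A ⊔ B, A)
  | hyp {φ : FAI L Y} (h : φ ∈ Th) : ProvCut Th φ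
  | cut {A B C D : Y → L} : ProvCut Th (A, B) → ProvCut Th (B ⊔ C, D) → ProvCut Th (A ⊔ C, D)

/-- Residuum a → b = ⋁{c : a ⊗ c ≤ b}. -/
def resid [CompleteResiduatedLattice L] (a b : L) : L := sSup {c | a * c ≤ b}

/-- Subsethood degree S(A,B) = ⋀_{y∈Y} (A(y) → B(y)). -/
def subDeg [CompleteResiduatedLattice L] (A B : Y → L) : L := ⨅ y, resid (A y) (B y)

/-- c ⊗ B, pointwise. -/
def scMul [CompleteResiduatedLattice L] (c : L) (B : Y → L) : Y → L := fun y => c * B y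

/-- ||A ⇒ B||^S_M = ⋁{c ∈ L : M ⊨^S A ⇒ c ⊗ B}. -/
def truthDeg [CompleteResiduatedLattice L] (S : Set (OpPair L Y)) (M A B : Y → L) : L :=
  sSup {c | Sat S M (A, scMul c B)}

/-- ||A ⇒ B||^S_Th = ⋀_{M ∈ Mod^S(Th)} ||A ⇒ B||^S_M. -/
def entDeg [CompleteResiduatedLattice L] (S : Set (OpPair L Y)) (Th : Set (FAI L Y))
    (A B : Y → L) : L :=
  ⨅ M ∈ ModS S Th, truthDeg S M A B

/-- Immediate consequence operator t^S_Th. -/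
def tOp [CompleteResiduatedLattice L] (S : Set (OpPair L Y)) (Th : Set (FAI L Y))
    (M : Y → L) : Y → L :=
  M ⊔ sSup {N | ∃ φ ∈ Th, ∃ p ∈ S, p.1 φ.1 ≤ M ∧ N = p.1 φ.2}

/-- S-pseudo-intents, defined by well-founded recursion on ⊊ (L^Y is finite). -/
noncomputable def IsPseudoIntent [CompleteResiduatedLattice L] [Finite L] [Finite Y]
    (dn : (Y → L) → (Y → L)) : (Y → L) → Prop :=
  (wellFounded_lt (α := Y → L)).fix
    (fun P rec => P < dn P ∧ ∀ Q, ∀ h : Q < P, rec Q h → dn Q ≤ P)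

end FAIparam

/-!
Both `M ↦ [M]^S_Σ` and `M ↦ M^{↓↑}` are closure operators on `L^Y`, whose closed sets are the
S-models of `Σ` and the fixed points of `↓↑` (the intents), and a closure operator is determined
by its closed sets; this gives (2) ↔ (3). For (1) ↔ (2): an FAI holds in `I` iff it holds in every
intent, since each `I_x` is an intent and S-validity is preserved by intersections and by the upper
adjoints `g`. So completeness says that models and intents validate the same FAIs; conversely the
FAI `M ⇒ M^{↓↑}` is valid in every intent, so it holds in each model `M`, forcing `M` to be an
intent.
-/

namespace ClosureOperator

variable {α : Type*} [PartialOrder α]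

theorem ext_isClosed_iff {c₁ c₂ : ClosureOperator α} :
    c₁ = c₂ ↔ ∀ x, c₁.IsClosed x ↔ c₂.IsClosed x :=
  ⟨fun h _ => h ▸ Iff.rfl, ext_isClosed c₁ c₂⟩

end ClosureOperator

namespace FAIparam

variable {L Y X : Type*} [CompleteResiduatedLattice L] {S : Set (OpPair L Y)} {I : X → Y → L}
  {Th : Set (FAI L Y)}

theorem Sat.le_of_fst_le (hS : IsParam S) {M A B : Y → L} (h : Sat S M (A, B)) (hA : A ≤ M) :
    B ≤ M :=
  h (id, id) hS.2.1 hA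

theorem Sat.apply_upper (hS : IsParam S) {M : Y → L} {φ : FAI L Y} {p : OpPair L Y}
    (hp : p ∈ S) (hM : Sat S M φ) : Sat S (p.2 M) φ := by
  intro q hq hle
  have hpq : p.1 (q.1 φ.1) ≤ M := (hS.1 p hp _ _).2 hle
  exact (hS.1 p hp _ _).1 (hM _ (hS.2.2 p hp q hq) hpq)

theorem sat_iInf {ι : Sort*} {M : ι → Y → L} {φ : FAI L Y} (h : ∀ i, Sat S (M i) φ) :
    Sat S (⨅ i, M i) φ :=
  fun p hp hle => le_iInf fun i => h i p hp (hle.trans (iInf_le M i))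

theorem sInf_mem_modS {T : Set (Y → L)} (hT : T ⊆ ModS S Th) : sInf T ∈ ModS S Th := by
  intro φ hφ
  rw [sInf_eq_iInf']
  exact sat_iInf fun M => hT M.2 φ hφ

theorem entails_iff {φ : FAI L Y} : Entails S Th φ ↔ ∀ M ∈ ModS S Th, Sat S M φ :=
  ⟨fun h _ hM => h hM φ rfl, fun h M hM _ hψ => hψ ▸ h M hM⟩

theorem entails_of_mem {φ : FAI L Y} (hφ : φ ∈ Th) : Entails S Th φ :=
  entails_iff.2 fun _ hM => hM φ hφ

theorem le_dnup (M : Y → L) : M ≤ dnup S I M :=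
  le_iInf₂ fun _ hxg => hxg.2

theorem dnup_apply_self (hS : IsParam S) (x : X) : dnup S I (I x) = I x :=
  le_antisymm (iInf₂_le (x, id) ⟨⟨id, hS.2.1⟩, le_rfl⟩) (le_dnup _)

theorem sat_dnup (hS : IsParam S) {φ : FAI L Y} (hI : CtxSat S I φ) (M : Y → L) :
    Sat S (dnup S I M) φ :=
  sat_iInf fun xg => sat_iInf fun hxg => by
    obtain ⟨f, hf⟩ := hxg.1
    exact (hI xg.1).apply_upper hS hf

theorem ctxSat_iff (hS : IsParam S) {φ : FAI L Y} :
    CtxSat S I φ ↔ ∀ M ∈ {M : Y → L | M = dnup S I M}, Sat S M φ :=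
  ⟨fun hI M hM => hM ▸ sat_dnup hS hI M,
    fun h x => h (I x) (dnup_apply_self hS x).symm⟩

theorem ctxSat_dnup (hS : IsParam S) (M : Y → L) : CtxSat S I (M, dnup S I M) := by
  intro x p hp hle
  have hM : M ≤ p.2 (I x) := (hS.1 p hp _ _).1 hle
  exact (hS.1 p hp _ _).2 (iInf₂_le (x, p.2) ⟨⟨p.1, hp⟩, hM⟩)

variable (S I Th)

def dnupClosure : ClosureOperator (Y → L) :=
  ClosureOperator.mk₂ (dnup S I) le_dnup fun _ _ h =>
    le_iInf₂ fun xg hxg => iInf₂_le xg ⟨hxg.1, h.trans (iInf₂_le xg hxg)⟩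

def modelClosure : ClosureOperator (Y → L) :=
  ClosureOperator.ofCompletePred (· ∈ ModS S Th) fun _ => sInf_mem_modS

variable {S I Th}

theorem modelClosure_apply (A : Y → L) : modelClosure S Th A = clS S Th A := by
  simp only [modelClosure, clS, sInf_eq_iInf', and_comm]
  rfl

theorem isClosed_modelClosure_iff {M : Y → L} : (modelClosure S Th).IsClosed M ↔ M ∈ ModS S Th :=
  Iff.rfl

theorem isClosed_dnupClosure_iff {M : Y → L} : (dnupClosure S I).IsClosed M ↔ M = dnup S I M :=
  (dnupClosure S I).isClosed_iff.trans eq_comm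

theorem modS_eq_iff_forall_clS_eq :
    ModS S Th = {M | M = dnup S I M} ↔ ∀ M, clS S Th M = dnup S I M := by
  calc ModS S Th = {M | M = dnup S I M}
      ↔ ∀ M, (modelClosure S Th).IsClosed M ↔ (dnupClosure S I).IsClosed M := by
        simp only [Set.ext_iff, isClosed_modelClosure_iff, isClosed_dnupClosure_iff]
        rfl
    _ ↔ modelClosure S Th = dnupClosure S I := ClosureOperator.ext_isClosed_iff.symm
    _ ↔ ∀ M, clS S Th M = dnup S I M := by
        rw [ClosureOperator.ext_iff]
        simp only [modelClosure_apply]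
        rfl

theorem modS_eq_of_sComplete (hS : IsParam S) (h : SComplete S Th I) :
    ModS S Th = {M | M = dnup S I M} := by
  ext M
  constructor
  · intro hM
    have hent : Entails S Th (M, dnup S I M) := (h M _).2 (ctxSat_dnup hS M)
    exact le_antisymm (le_dnup M) ((entails_iff.1 hent M hM).le_of_fst_le hS le_rfl)
  · intro hM φ hφ
    rw [show M = dnup S I M from hM]
    exact sat_dnup hS ((h φ.1 φ.2).1 (entails_of_mem hφ)) M

theorem sComplete_of_modS_eq (hS : IsParam S) (h : ModS S Th = {M | M = dnup S I M}) :
    SComplete S Th I := by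
  intro A B
  rw [entails_iff, ctxSat_iff hS, h]

theorem sComplete_tfae_general
    {L Y X : Type*} [CompleteResiduatedLattice L]
    (S : Set (OpPair L Y)) (hS : IsParam S) (I : X → Y → L) (Th : Set (FAI L Y)) :
    [SComplete S Th I,
     ModS S Th = {M : Y → L | M = dnup S I M},
     ∀ M : Y → L, clS S Th M = dnup S I M].TFAE := by
  tfae_have 1 → 2 := modS_eq_of_sComplete hS
  tfae_have 2 → 1 := sComplete_of_modS_eq hS
  tfae_have 2 ↔ 3 := modS_eq_iff_forall_clS_eq
  tfae_finish

/-- characterization of S-complete sets of FAIs in an L-context. -/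
theorem sComplete_tfae
    {L Y X : Type*} [CompleteResiduatedLattice L] [Nonempty Y] [Nonempty X]
    (S : Set (OpPair L Y)) (hS : IsParam S) (I : X → Y → L) (Th : Set (FAI L Y)) :
    [SComplete S Th I,
     ModS S Th = {M : Y → L | M = dnup S I M},
     ∀ M : Y → L, clS S Th M = dnup S I M].TFAE :=
  sComplete_tfae_general S hS I Th

end FAIparam
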